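/- In the contextual category associated to a model of the theory of substitutions, the connecting morphisms are functorial: q(id_{ft(A)}, A) = id_A, and for composable morphisms g : C → B and f : B → ft_k(A), one has q(f ∘ g, A) = q(f, A) ∘ q(g, A[f]). -/

import Mathlib

universe u

/-- Iterated `ft`, lowering a context of length `k` to one of length `m ≤ k`. -/
def ftLe' {Ctx : ℕ → Type u} (ft : ∀ n, Ctx (n + 1) → Ctx n) :
    ∀ {k m : ℕ}, m ≤ k → Ctx k → Ctx m
  | 0, 0, _, A => A
  | k + 1, m, h, A =>
    if hm : m = k + 1 then cast (congrArg Ctx hm.symm) A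
    else ftLe' ft (by omega) (ft k A)

/-- A model of the partial Horn theory of substitutions `𝕊`: sorts `(ctx, n)` and `(tm, n)`
(with `(ty, n) := (ctx, n+1)`), operations `*`, `ft`, `ty`, variables `v_{n,i}` and full
substitution `subst_{p,n,k}` (a partial operation, represented using `Part`), subject to the
axioms of `𝕊`. -/
structure SubModel : Type (u + 1) where
  Ctx : ℕ → Type u
  Tm : ℕ → Type u
  star : Ctx 0
  ctx_zero_unique : ∀ A : Ctx 0, A = star
  ft : ∀ n, Ctx (n + 1) → Ctx n
  ty : ∀ n, Tm n → Ctx (n + 1)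
  v : ∀ n i, i < n → Ctx n → Tm n
  substTy : ∀ n k, Ctx n → Ctx (k + 1) → (Fin k → Tm n) → Part (Ctx (n + 1))
  substTm : ∀ n k, Ctx n → Tm k → (Fin k → Tm n) → Part (Tm n)
  -- the axioms are stated below, after the auxiliary definitions
  ax_def_substTy : ∀ n k (B : Ctx n) (A : Ctx (k + 1)) (a : Fin k → Tm n),
    (substTy n k B A a).Dom ↔
      ∀ i : Fin k, ty n (a i) ∈ substTy n i B
        (ftLe' ft (Nat.succ_le_of_lt i.isLt) (ft k A))
        (fun j => a (Fin.castLE (le_of_lt i.isLt) j))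
  ax_def_substTm : ∀ n k (B : Ctx n) (b : Tm k) (a : Fin k → Tm n),
    (substTm n k B b a).Dom ↔
      ∀ i : Fin k, ty n (a i) ∈ substTy n i B
        (ftLe' ft (Nat.succ_le_of_lt i.isLt) (ft k (ty k b)))
        (fun j => a (Fin.castLE (le_of_lt i.isLt) j))
  ax_type_var : ∀ n i (h : i < n) (A : Ctx n),
    ty n (v n i h A) ∈ substTy n (n - i - 1) A
      (ftLe' ft (by omega) A)
      (fun j => v n (n - 1 - j) (by omega) A)
  ax_type_substTy : ∀ n k B A a C, C ∈ substTy n k B A a → ft n C = B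
  ax_type_substTm : ∀ n k (B : Ctx n) (b : Tm k) (a : Fin k → Tm n),
    (substTm n k B b a).map (ty n) = substTy n k B (ty k b) a
  ax_subst_var_ty : ∀ n (A : Ctx (n + 1)),
    substTy n n (ft n A) A (fun j => v n (n - 1 - j) (by omega) (ft n A)) = Part.some A
  ax_subst_var_tm : ∀ n (b : Tm n),
    substTm n n (ft n (ty n b)) b
      (fun j => v n (n - 1 - j) (by omega) (ft n (ty n b))) = Part.some b
  ax_var_subst : ∀ n k (B : Ctx n) (A : Ctx k) (a : Fin k → Tm n)
    (_ : ∀ i : Fin k, ty n (a i) ∈ substTy n i B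
        (ftLe' ft (Nat.succ_le_of_lt i.isLt) A)
        (fun j => a (Fin.castLE (le_of_lt i.isLt) j)))
    (i : ℕ) (h : i < k),
    substTm n k B (v k i h A) a = Part.some (a ⟨k - i - 1, by omega⟩)
  ax_subst_subst_tm : ∀ n k m (C : Ctx n) (B : Ctx k) (b : Fin k → Tm n)
    (a : Fin m → Tm k) (t : Tm m)
    (_ : ∀ i : Fin k, ty n (b i) ∈ substTy n i C
        (ftLe' ft (Nat.succ_le_of_lt i.isLt) B)
        (fun j => b (Fin.castLE (le_of_lt i.isLt) j)))
    (_ : ∀ i : Fin m, ty k (a i) ∈ substTy k i B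
        (ftLe' ft (Nat.succ_le_of_lt i.isLt) (ft m (ty m t)))
        (fun j => a (Fin.castLE (le_of_lt i.isLt) j)))
    (s : Tm k) (_ : s ∈ substTm k m B t a)
    (c : Fin m → Tm n) (_ : ∀ i, c i ∈ substTm n k C (a i) b),
    substTm n k C s b = substTm n m C t c
  ax_subst_subst_ty : ∀ n k m (C : Ctx n) (B : Ctx k) (b : Fin k → Tm n)
    (a : Fin m → Tm k) (A : Ctx (m + 1))
    (_ : ∀ i : Fin k, ty n (b i) ∈ substTy n i C
        (ftLe' ft (Nat.succ_le_of_lt i.isLt) B)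
        (fun j => b (Fin.castLE (le_of_lt i.isLt) j)))
    (_ : ∀ i : Fin m, ty k (a i) ∈ substTy k i B
        (ftLe' ft (Nat.succ_le_of_lt i.isLt) (ft m A))
        (fun j => a (Fin.castLE (le_of_lt i.isLt) j)))
    (A' : Ctx (k + 1)) (_ : A' ∈ substTy k m B A a)
    (c : Fin m → Tm n) (_ : ∀ i, c i ∈ substTm n k C (a i) b),
    substTy n k C A' b = substTy n m C A c


namespace SubModel

variable (M : SubModel.{u})

/-- The `Hom` predicate of `𝕊`: the tuple `(a_1, …, a_k)` is a morphism `B → A` of the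
associated category, i.e. each `a_i` has the type obtained by substituting `a_1, …, a_{i-1}`
into the `i`-th component of `A`. -/
def Hom (n k : ℕ) (B : M.Ctx n) (A : M.Ctx k) (a : Fin k → M.Tm n) : Prop :=
  ∀ i : Fin k, M.ty n (a i) ∈ M.substTy n i B
    (ftLe' M.ft (Nat.succ_le_of_lt i.isLt) A)
    (fun j => a (Fin.castLE (le_of_lt i.isLt) j))

/-- The identity morphism `id_A = (v_{n,n-1}(A), …, v_{n,0}(A))`. -/
def idTuple {n : ℕ} (A : M.Ctx n) : Fin n → M.Tm n :=
  fun j => M.v n (n - 1 - j) (by omega) A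

/-- The projection `p_A = (v_{n+1,n}(A), …, v_{n+1,1}(A)) : A → ft(A)`. -/
def pTuple {n : ℕ} (A : M.Ctx (n + 1)) : Fin n → M.Tm (n + 1) :=
  fun j => M.v (n + 1) (n - j) (by omega) A

/-- `f : ft(A) → A` is a section of the projection `p_A`: it is a morphism and
`p_A ∘ f = id_{ft(A)}` (composition is componentwise substitution). -/
def IsSection {k : ℕ} (A : M.Ctx (k + 1)) (f : Fin (k + 1) → M.Tm k) : Prop :=
  M.Hom k (k + 1) (M.ft k A) A f ∧
  ∀ j : Fin k, M.substTm k (k + 1) (M.ft k A) (M.pTuple A j) f =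
    Part.some (M.idTuple (M.ft k A) j)

/-- The map `φ(a) = (v_{k,k-1}(ft A), …, v_{k,0}(ft A), a)`. -/
def phi {k : ℕ} (A : M.Ctx (k + 1)) (a : M.Tm k) : Fin (k + 1) → M.Tm k :=
  fun j => if h : (j : ℕ) < k then M.v k (k - 1 - j) (by omega) (M.ft k A) else a

end SubModel

/-!
Both identities are checked componentwise. The components of `q(f, A)` other than the last are
weakenings `a_i[p]`, so composing with a morphism `c` into `A[f]` yields `a_i[p ∘ c]` by the
associativity axiom of substitution; for `c = q(g, A[f])` one has `p ∘ q(g, A[f]) = g ∘ p`,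
and associativity once more identifies `a_i[g ∘ p]` with `(a_i[g])[p]`, the corresponding
component of `q(f ∘ g, A)`. The last components are top variables, which substitution sends to
the last entry of the substituted tuple. For the identity, the weakened variables of `ft A` are
exactly the variables of `A`.
-/

section FtLe

variable {Ctx : ℕ → Type u} (ft : ∀ n, Ctx (n + 1) → Ctx n)

theorem ftLe'_self : ∀ {k} (h : k ≤ k) (A : Ctx k), ftLe' ft h A = A
  | 0, _, _ => rfl
  | k + 1, h, A => by simp [ftLe']

theorem ftLe'_succ {k m : ℕ} (h' : m ≤ k + 1) (h : m ≤ k) (A : Ctx (k + 1)) :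
    ftLe' ft h' A = ftLe' ft h (ft k A) := by
  simp only [ftLe', dif_neg (show m ≠ k + 1 by omega)]

theorem ftLe'_ftLe' {k : ℕ} : ∀ {m l : ℕ} (h₁ : l ≤ m) (h₂ : m ≤ k) (h : l ≤ k) (A : Ctx k),
    ftLe' ft h₁ (ftLe' ft h₂ A) = ftLe' ft h A := by
  induction k with
  | zero =>
    intro m l h₁ h₂ h A
    obtain rfl : m = 0 := by omega
    obtain rfl : l = 0 := by omega
    rfl
  | succ k ih =>
    intro m l h₁ h₂ h A
    by_cases hm : m = k + 1
    · subst hm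
      rw [ftLe'_self]
    · rw [ftLe'_succ ft h₂ (by omega), ftLe'_succ ft h (by omega), ih]

theorem ft_ftLe' {k l : ℕ} (h : l + 1 ≤ k) (h' : l ≤ k) (A : Ctx k) :
    ft l (ftLe' ft h A) = ftLe' ft h' A := by
  rw [← ftLe'_ftLe' ft (Nat.le_succ l) h h' A, ftLe'_succ ft (Nat.le_succ l) le_rfl, ftLe'_self]

end FtLe

namespace SubModel

variable (M : SubModel.{u})

/-- `q = q(a, A) : A[a] → A`, where `Aa = A[a]`; the type `A` itself is not needed to pin `q`. -/
def IsQ {n k : ℕ} (Aa : M.Ctx (n + 1)) (a : Fin k → M.Tm n) (q : Fin (k + 1) → M.Tm (n + 1)) :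
    Prop :=
  (∀ i : Fin k, q i.castSucc ∈ M.substTm (n + 1) n Aa (a i) (M.pTuple Aa)) ∧
    q (Fin.last k) = M.v (n + 1) 0 (Nat.succ_pos n) Aa

variable {M}

theorem v_congr {n i i' : ℕ} (h : i < n) (h' : i' < n) (A : M.Ctx n) (e : i = i') :
    M.v n i h A = M.v n i' h' A := by
  subst e
  rfl

theorem ty_v_mem {n i : ℕ} (h : i < n) (A : M.Ctx n) {l : ℕ} (hl : l = n - i - 1)
    (hle : l + 1 ≤ n) :
    M.ty n (M.v n i h A) ∈
      M.substTy n l A (ftLe' M.ft hle A) (M.idTuple A ∘ Fin.castLE (Nat.le_of_succ_le hle)) := by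
  subst hl
  exact M.ax_type_var n i h A

theorem substTm_v {n k : ℕ} {B : M.Ctx n} {A : M.Ctx k} {a : Fin k → M.Tm n}
    (ha : M.Hom n k B A a) {i : ℕ} (h : i < k) (j : Fin k) (hj : (j : ℕ) = k - i - 1) :
    M.substTm n k B (M.v k i h A) a = Part.some (a j) := by
  rw [M.ax_var_subst n k B A a ha i h,
    show (⟨k - i - 1, by omega⟩ : Fin k) = j from Fin.ext hj.symm]

theorem pTuple_hom {k : ℕ} (A : M.Ctx (k + 1)) : M.Hom (k + 1) k A (M.ft k A) (M.pTuple A) := by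
  intro i
  have hv := ty_v_mem (show k - i < k + 1 by omega) A (l := i) (by omega) (by omega)
  rwa [ftLe'_succ M.ft _ (Nat.succ_le_of_lt i.isLt)] at hv

theorem pTuple_hom_of_mem {m n : ℕ} {C : M.Ctx m} {A : M.Ctx (n + 1)} {b : Fin n → M.Tm m}
    {Ab : M.Ctx (m + 1)} (hAb : Ab ∈ M.substTy m n C A b) :
    M.Hom (m + 1) m Ab C (M.pTuple Ab) :=
  M.ax_type_substTy m n C A b Ab hAb ▸ pTuple_hom Ab

theorem ty_v_zero_mem {k : ℕ} (A : M.Ctx (k + 1)) :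
    M.ty (k + 1) (M.v (k + 1) 0 (Nat.succ_pos k) A) ∈ M.substTy (k + 1) k A A (M.pTuple A) := by
  have hv := ty_v_mem (Nat.succ_pos k) A (l := k) (by omega) le_rfl
  rwa [ftLe'_self] at hv

theorem hom_of_castSucc {d k : ℕ} {D : M.Ctx d} {A : M.Ctx (k + 1)} {c : Fin (k + 1) → M.Tm d}
    (hc : M.Hom d k D (M.ft k A) (c ∘ Fin.castSucc))
    (hlast : M.ty d (c (Fin.last k)) ∈ M.substTy d k D A (c ∘ Fin.castSucc)) :
    M.Hom d (k + 1) D A c := by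
  intro i
  induction i using Fin.lastCases with
  | last =>
    rw [ftLe'_self]
    exact hlast
  | cast i =>
    rw [ftLe'_succ M.ft _ (Nat.succ_le_of_lt i.isLt)]
    exact hc i

theorem Hom.comp {d n k : ℕ} {D : M.Ctx d} {C : M.Ctx n} {B : M.Ctx k}
    {c : Fin n → M.Tm d} {b : Fin k → M.Tm n} {bc : Fin k → M.Tm d}
    (hb : M.Hom n k C B b) (hc : M.Hom d n D C c)
    (hbc : ∀ i, bc i ∈ M.substTm d n D (b i) c) :
    M.Hom d k D B bc := by
  intro i
  have hle : (i : ℕ) + 1 ≤ k := i.isLt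
  have hb_restrict : M.Hom n i C (M.ft i (ftLe' M.ft hle B)) (b ∘ Fin.castLE i.isLt.le) := by
    intro j
    rw [ft_ftLe' M.ft hle i.isLt.le, ftLe'_ftLe' M.ft _ i.isLt.le (by omega)]
    exact hb (Fin.castLE i.isLt.le j)
  rw [← M.ax_subst_subst_ty d n i D C c (b ∘ Fin.castLE i.isLt.le) _ hc hb_restrict _ (hb i) _
    (fun j => hbc (Fin.castLE i.isLt.le j)), ← M.ax_type_substTm]
  exact Part.mem_map _ (hbc i)

theorem IsQ.hom {m n : ℕ} {C : M.Ctx m} {Af : M.Ctx (n + 1)} {b : Fin n → M.Tm m}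
    (hb : M.Hom m n C (M.ft n Af) b) {Ag : M.Ctx (m + 1)} (hAg : Ag ∈ M.substTy m n C Af b)
    {qg : Fin (n + 1) → M.Tm (m + 1)} (hqg : M.IsQ Ag b qg) :
    M.Hom (m + 1) (n + 1) Ag Af qg := by
  have hp := pTuple_hom_of_mem hAg
  refine hom_of_castSucc (hb.comp hp hqg.1) ?_
  rw [hqg.2, ← M.ax_subst_subst_ty (m + 1) m n Ag C (M.pTuple Ag) b Af hp hb Ag hAg
    (qg ∘ Fin.castSucc) hqg.1]
  exact ty_v_zero_mem Ag

theorem substTm_pTuple {d n : ℕ} {D : M.Ctx d} {A : M.Ctx (n + 1)} {c : Fin (n + 1) → M.Tm d}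
    (hc : M.Hom d (n + 1) D A c) (j : Fin n) :
    M.substTm d (n + 1) D (M.pTuple A j) c = Part.some (c j.castSucc) :=
  substTm_v hc _ j.castSucc (by simp)

theorem substTm_weakening {d n : ℕ} {D : M.Ctx d} {A : M.Ctx (n + 1)} {c : Fin (n + 1) → M.Tm d}
    (hc : M.Hom d (n + 1) D A c) {t : M.Tm n} (ht : M.ft n (M.ty n t) = M.ft n A)
    {s : M.Tm (n + 1)} (hs : s ∈ M.substTm (n + 1) n A t (M.pTuple A)) :
    M.substTm d (n + 1) D s c = M.substTm d n D t (c ∘ Fin.castSucc) :=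
  M.ax_subst_subst_tm d (n + 1) n D A c (M.pTuple A) t hc (ht ▸ pTuple_hom A) s hs _
    fun j => (substTm_pTuple hc j).symm ▸ Part.mem_some _

theorem IsQ.eq_idTuple {k : ℕ} {A : M.Ctx (k + 1)} {q : Fin (k + 1) → M.Tm (k + 1)}
    (hq : M.IsQ A (M.idTuple (M.ft k A)) q) : q = M.idTuple A := by
  funext i
  induction i using Fin.lastCases with
  | last => exact hq.2.trans (v_congr _ _ A (by simp))
  | cast i =>
    have hi := i.isLt
    have hsubst := substTm_v (pTuple_hom A) (i := k - 1 - i) (by omega) i (by omega)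
    exact (Part.mem_some_iff.mp (hsubst ▸ hq.1 i)).trans (v_congr _ _ A (by simp))

theorem IsQ.unique {n k : ℕ} {Aa : M.Ctx (n + 1)} {a : Fin k → M.Tm n}
    {q q' : Fin (k + 1) → M.Tm (n + 1)} (hq : M.IsQ Aa a q) (hq' : M.IsQ Aa a q') : q = q' := by
  funext i
  induction i using Fin.lastCases with
  | last => exact hq.2.trans hq'.2.symm
  | cast i => exact Part.mem_unique (hq.1 i) (hq'.1 i)

theorem IsQ.comp {m n k : ℕ} {C : M.Ctx m} {B : M.Ctx n} {A : M.Ctx (k + 1)}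
    {b : Fin n → M.Tm m} (hb : M.Hom m n C B b) {a : Fin k → M.Tm n}
    (ha : M.Hom n k B (M.ft k A) a) {Af : M.Ctx (n + 1)} (hAf : Af ∈ M.substTy n k B A a)
    {qf : Fin (k + 1) → M.Tm (n + 1)} (hqf : M.IsQ Af a qf)
    {fg : Fin k → M.Tm m} (hfg : ∀ i, fg i ∈ M.substTm m n C (a i) b)
    {Ag : M.Ctx (m + 1)} (hAg : Ag ∈ M.substTy m n C Af b)
    {qg : Fin (n + 1) → M.Tm (m + 1)} (hqg : M.IsQ Ag b qg)
    {cc : Fin (k + 1) → M.Tm (m + 1)}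
    (hcc : ∀ i, cc i ∈ M.substTm (m + 1) (n + 1) Ag (qf i) qg) :
    M.IsQ Ag fg cc := by
  have hB : M.ft n Af = B := M.ax_type_substTy n k B A a Af hAf
  have hqg_hom : M.Hom (m + 1) (n + 1) Ag Af qg := hqg.hom (hB ▸ hb) hAg
  constructor
  · intro i
    have hai : M.ft n (M.ty n (a i)) = B := M.ax_type_substTy n i B _ _ _ (ha i)
    have h_weak := substTm_weakening hqg_hom (hai.trans hB.symm) (hqf.1 i)
    have h_assoc := M.ax_subst_subst_tm (m + 1) m n Ag C (M.pTuple Ag) b (a i)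
      (pTuple_hom_of_mem hAg) (hai ▸ hb) (fg i) (hfg i) (qg ∘ Fin.castSucc) hqg.1
    have hcc_i := hcc i.castSucc
    rwa [h_weak, ← h_assoc] at hcc_i
  · have hcc_last := hcc (Fin.last k)
    rw [hqf.2, substTm_v hqg_hom (Nat.succ_pos n) (Fin.last n) (by simp), hqg.2] at hcc_last
    exact Part.mem_some_iff.mp hcc_last

end SubModel

/-- In the contextual category `F(M)` associated to a model `M` of the
theory of substitutions, the connecting morphisms are functorial:
`q(id_{ft A}, A) = id_A`, and `q(f ∘ g, A) = q(f, A) ∘ q(g, A[f])` for composable `g : C → B`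
and `f : B → ft_k(A)`.  Here `A[f]` is the element of `subst_ty(B, A, f)`, and `q(f, A)` is
the tuple whose first `k` components are the components of `f` weakened along the projection
of `A[f]` and whose last component is the top variable of `A[f]`; composition of tuples is
componentwise substitution. -/
theorem submodel_q_functorial (M : SubModel.{u}) :
    (∀ (k : ℕ) (A : M.Ctx (k + 1)) (qf : Fin (k + 1) → M.Tm (k + 1)),
      (∀ i : Fin k, qf i.castSucc ∈
        M.substTm (k + 1) k A (M.idTuple (M.ft k A) i) (M.pTuple A)) →
      qf (Fin.last k) = M.v (k + 1) 0 (by omega) A →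
      qf = M.idTuple A) ∧
    (∀ (m n k : ℕ) (C : M.Ctx m) (B : M.Ctx n) (A : M.Ctx (k + 1))
      (b : Fin n → M.Tm m) (_ : M.Hom m n C B b)
      (a : Fin k → M.Tm n) (_ : M.Hom n k B (M.ft k A) a)
      (Af : M.Ctx (n + 1)) (_ : Af ∈ M.substTy n k B A a)
      (qf : Fin (k + 1) → M.Tm (n + 1))
      (_ : ∀ i : Fin k, qf i.castSucc ∈ M.substTm (n + 1) n Af (a i) (M.pTuple Af))
      (_ : qf (Fin.last k) = M.v (n + 1) 0 (by omega) Af)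
      (fg : Fin k → M.Tm m) (_ : ∀ i, fg i ∈ M.substTm m n C (a i) b)
      (Afg : M.Ctx (m + 1)) (_ : Afg ∈ M.substTy m k C A fg)
      (qfg : Fin (k + 1) → M.Tm (m + 1))
      (_ : ∀ i : Fin k, qfg i.castSucc ∈ M.substTm (m + 1) m Afg (fg i) (M.pTuple Afg))
      (_ : qfg (Fin.last k) = M.v (m + 1) 0 (by omega) Afg)
      (Ag : M.Ctx (m + 1)) (_ : Ag ∈ M.substTy m n C Af b)
      (qg : Fin (n + 1) → M.Tm (m + 1))
      (_ : ∀ i : Fin n, qg i.castSucc ∈ M.substTm (m + 1) m Ag (b i) (M.pTuple Ag))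
      (_ : qg (Fin.last n) = M.v (m + 1) 0 (by omega) Ag)
      (cc : Fin (k + 1) → M.Tm (m + 1))
      (_ : ∀ i, cc i ∈ M.substTm (m + 1) (n + 1) Ag (qf i) qg),
      cc = qfg) := by
  refine ⟨fun k A qf hqf hqf_last => SubModel.IsQ.eq_idTuple ⟨hqf, hqf_last⟩, ?_⟩
  intro m n k C B A b hb a ha Af hAf qf hqf hqf_last fg hfg Afg hAfg qfg hqfg hqfg_last
    Ag hAg qg hqg hqg_last cc hcc
  have hAg_eq : Ag = Afg :=
    Part.mem_unique (M.ax_subst_subst_ty m n k C B b a A hb ha Af hAf fg hfg ▸ hAg) hAfg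
  subst hAg_eq
  exact (SubModel.IsQ.comp hb ha hAf ⟨hqf, hqf_last⟩ hfg hAg ⟨hqg, hqg_last⟩ hcc).unique
    ⟨hqfg, hqfg_last⟩
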